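/- arXiv:1510.05480 — 8 statements merged into one kernel-verified Lean document; each statement's English description precedes it below -/
import Mathlib

section
/- The three first integrals H1 = x² - z², H2 = z² + u² - y², H3 = u(z + x) of the Shivamoggi equations are functionally independent on the open set where u ≠ 0 and x + z ≠ 0, i.e., their gradients are linearly independent there. -/
/-- The gradients (in coordinates (u,x,y,z)) of the three first integrals
H₁ = x² - z², H₂ = z² + u² - y², H₃ = u(z + x) of the Shivamoggi equations,
namely ∇H₁ = (0, 2x, 0, -2z), ∇H₂ = (2u, 0, -2y, 2z), ∇H₃ = (z+x, u, 0, u),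
are linearly independent at every point with u ≠ 0, x + z ≠ 0 and y ≠ 0. -/
theorem shivamoggi_integrals_functionally_independent
    (u x y z : ℝ) (hu : u ≠ 0) (hxz : x + z ≠ 0) (hy : y ≠ 0) :
    LinearIndependent ℝ
      ![(![0, 2 * x, 0, -2 * z] : Fin 4 → ℝ),
        ![2 * u, 0, -2 * y, 2 * z],
        ![z + x, u, 0, u]] := by
  rw [Fintype.linearIndependent_iff]
  intro g hg i
  have h0 := congrFun hg 0
  have h1 := congrFun hg 1
  have h2 := congrFun hg 2
  have h3 := congrFun hg 3
  simp [Fin.sum_univ_three] at h0 h1 h2 h3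
  have hb : g 1 = 0 := h2.resolve_right hy
  have hc : g 2 = 0 := by
    rw [hb] at h0
    simp at h0
    exact h0.resolve_right (fun h => hxz (by linarith))
  have ha : g 0 = 0 := by
    rw [hb] at h3; rw [hc] at h1 h3
    have : g 0 * (x + z) = 0 := by nlinarith
    exact (mul_eq_zero.mp this).resolve_right hxz
  fin_cases i <;> simp [ha, hb, hc]
end

section
/- The functions H1 = z/u, H2 = y/z, H3 = (y² + z² - u² - x²/4)/u, and H4 = (y² + z² - u² - x²/4)/y are first integrals of the generalized Raychaudhuri system ẋ = -((1/2)x² + 2(y² + z² - u²)), ẏ = -xy, ż = -xz, u̇ = -xu, on the open sets where their denominators are nonzero. -/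
/-! Every one of y, z, u, and also N = y² + z² - u² - x²/4, solves the linear equation
ḟ = -x f along the flow, so the quotient of any two of them has zero derivative. -/

section CommonRate

variable {𝕜 : Type*} [NontriviallyNormedField 𝕜] {f g : 𝕜 → 𝕜} {a t : 𝕜}

theorem HasDerivAt.div_of_common_rate (hf : HasDerivAt f (a * f t) t)
    (hg : HasDerivAt g (a * g t) t) (hg0 : g t ≠ 0) :
    HasDerivAt (fun s => f s / g s) 0 t := by
  refine (hf.div hg hg0).congr_deriv ?_
  rw [div_eq_zero_iff]
  left
  ring

end CommonRate

theorem raychaudhuri_constraint_hasDerivAt {x y z u : ℝ → ℝ} {t : ℝ}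
    (hx : HasDerivAt x (-((1 / 2) * (x t) ^ 2 + 2 * ((y t) ^ 2 + (z t) ^ 2 - (u t) ^ 2))) t)
    (hy : HasDerivAt y (-(x t * y t)) t) (hz : HasDerivAt z (-(x t * z t)) t)
    (hu : HasDerivAt u (-(x t * u t)) t) :
    HasDerivAt (fun t => (y t) ^ 2 + (z t) ^ 2 - (u t) ^ 2 - (x t) ^ 2 / 4)
      (-x t * ((y t) ^ 2 + (z t) ^ 2 - (u t) ^ 2 - (x t) ^ 2 / 4)) t := by
  refine ((((hy.pow 2).add (hz.pow 2)).sub (hu.pow 2)).sub ((hx.pow 2).div_const 4)).congr_deriv ?_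
  push_cast
  ring

/-- H₁ = z/u, H₂ = y/z, H₃ = (y² + z² - u² - x²/4)/u and
H₄ = (y² + z² - u² - x²/4)/y are first integrals of the generalized
Raychaudhuri system ẋ = -((1/2)x² + 2(y² + z² - u²)), ẏ = -xy, ż = -xz,
u̇ = -xu, wherever the respective denominators are nonzero. -/
theorem raychaudhuri_first_integrals
    (x y z u : ℝ → ℝ)
    (hx : ∀ t, HasDerivAt x (-((1 / 2) * (x t) ^ 2 +
      2 * ((y t) ^ 2 + (z t) ^ 2 - (u t) ^ 2))) t)
    (hy : ∀ t, HasDerivAt y (-(x t * y t)) t)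
    (hz : ∀ t, HasDerivAt z (-(x t * z t)) t)
    (hu : ∀ t, HasDerivAt u (-(x t * u t)) t) :
    (∀ t, u t ≠ 0 → HasDerivAt (fun t => z t / u t) 0 t) ∧
    (∀ t, z t ≠ 0 → HasDerivAt (fun t => y t / z t) 0 t) ∧
    (∀ t, u t ≠ 0 → HasDerivAt (fun t =>
      ((y t) ^ 2 + (z t) ^ 2 - (u t) ^ 2 - (x t) ^ 2 / 4) / u t) 0 t) ∧
    (∀ t, y t ≠ 0 → HasDerivAt (fun t =>
      ((y t) ^ 2 + (z t) ^ 2 - (u t) ^ 2 - (x t) ^ 2 / 4) / y t) 0 t) := by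
  have rate {f : ℝ → ℝ} (hf : ∀ t, HasDerivAt f (-(x t * f t)) t) t :
      HasDerivAt f (-x t * f t) t := by
    simpa only [neg_mul] using hf t
  have hN t := raychaudhuri_constraint_hasDerivAt (hx t) (hy t) (hz t) (hu t)
  exact ⟨fun t ht => (rate hz t).div_of_common_rate (rate hu t) ht,
    fun t ht => (rate hy t).div_of_common_rate (rate hz t) ht,
    fun t ht => (hN t).div_of_common_rate (rate hu t) ht,
    fun t ht => (hN t).div_of_common_rate (rate hy t) ht⟩
end

section
/- The function H(x,z) = x²/(2z) + μz is a first integral of the reduced Raychaudhuri planar system ẋ = -(1/2)x² + μz², ż = -xz on the half-plane z > 0, and the planar system is Hamiltonian with respect to the symplectic form (1/z²) dx ∧ dz with Hamiltonian H. -/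
theorem deriv_sq_div_two_mul_add (c d x : ℝ) :
    deriv (fun x' => x' ^ 2 / (2 * c) + d) x = x / c := by
  have h : HasDerivAt (fun x' : ℝ => x' ^ 2 / (2 * c) + d) (2 * x / (2 * c)) x := by
    simpa using ((hasDerivAt_pow 2 x).div_const (2 * c)).add_const d
  rw [h.deriv, mul_div_mul_left x c two_ne_zero]

theorem hasDerivAt_div_two_mul_add_mul (a μ : ℝ) {z : ℝ} (hz : z ≠ 0) :
    HasDerivAt (fun z' => a / (2 * z') + μ * z') (-a / (2 * z ^ 2) + μ) z := by
  have hinv : HasDerivAt (fun z' : ℝ => a / 2 * z'⁻¹) (a / 2 * -(z ^ 2)⁻¹) z :=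
    (hasDerivAt_inv hz).const_mul (a / 2)
  have h := hinv.fun_add ((hasDerivAt_id' z).const_mul μ)
  rw [show (fun z' : ℝ => a / 2 * z'⁻¹ + μ * z') = fun z' => a / (2 * z') + μ * z' from
    funext fun _ => by ring] at h
  exact h.congr_deriv (by ring)

/-- H(x,z) = x²/(2z) + μz is a first integral of the reduced Raychaudhuri
planar system ẋ = -(1/2)x² + μz², ż = -xz on the half-plane z > 0:
f·∂ₓH + g·∂𝓏H = 0; moreover the system is Hamiltonian with respect to the
symplectic form (1/z²) dx ∧ dz, i.e. f = z²·∂𝓏H and g = -z²·∂ₓH. -/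
theorem reduced_raychaudhuri_hamiltonian (μ : ℝ) (x z : ℝ) (hz : 0 < z) :
    let f : ℝ := -(1 / 2) * x ^ 2 + μ * z ^ 2
    let g : ℝ := -(x * z)
    let Hx : ℝ := deriv (fun x' => x' ^ 2 / (2 * z) + μ * z) x
    let Hz : ℝ := deriv (fun z' => x ^ 2 / (2 * z') + μ * z') z
    f * Hx + g * Hz = 0 ∧ f = z ^ 2 * Hz ∧ g = -(z ^ 2) * Hx := by
  intro f g Hx Hz
  have hHx : Hx = x / z := deriv_sq_div_two_mul_add z (μ * z) x
  have hHz : Hz = -x ^ 2 / (2 * z ^ 2) + μ :=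
    (hasDerivAt_div_two_mul_add_mul (x ^ 2) μ hz.ne').deriv
  rw [hHx, hHz]
  refine ⟨?_, ?_, ?_⟩ <;> field_simp <;> ring
end

section
/- If the parameters of the hyperchaotic Lü system u̇ = δu + xz, ẋ = α(y-x) + u, ẏ = γy - xz, ż = -βz + xy satisfy γ = -β = δ, then I1 = e^{-γt}(y + u) and I2 = e^{-2γt}(y² + z²) are time-dependent first integrals: dI1/dt = dI2/dt = 0 along every solution. -/
/-! The coupling terms `± x z` in `u̇, ẏ` and `± x y z` in `(y² + z²)˙` cancel, so with
`δ = γ = -β` both `y + u` and `y² + z²` grow exactly exponentially, with rates `γ` and `2γ`;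
an exponential integrating factor turns each into a first integral. -/

open Real

theorem hasDerivAt_exp_neg_mul_mul_eq_zero {f : ℝ → ℝ} {c t : ℝ}
    (hf : HasDerivAt f (c * f t) t) :
    HasDerivAt (fun s => exp (-c * s) * f s) 0 t :=
  (((hasDerivAt_id' t).const_mul (-c)).exp.mul hf).congr_deriv (by ring)

theorem lu_time_dependent_first_integrals_general
    (β γ δ : ℝ) (hβ : γ = -β) (hδ : γ = δ)
    (u x y z : ℝ → ℝ)
    (hu : ∀ t, HasDerivAt u (δ * u t + x t * z t) t)
    (hy : ∀ t, HasDerivAt y (γ * y t - x t * z t) t)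
    (hz : ∀ t, HasDerivAt z (-β * z t + x t * y t) t) :
    (∀ t, HasDerivAt (fun t => exp (-γ * t) * (y t + u t)) 0 t) ∧
    (∀ t, HasDerivAt (fun t => exp (-2 * γ * t) * ((y t) ^ 2 + (z t) ^ 2)) 0 t) := by
  refine ⟨fun t => ?_, fun t => ?_⟩
  · have hsum : HasDerivAt (fun s => y s + u s) (γ * (y t + u t)) t :=
      ((hy t).add (hu t)).congr_deriv (by rw [← hδ]; ring)
    exact hasDerivAt_exp_neg_mul_mul_eq_zero hsum
  · have hsq : HasDerivAt (fun s => y s ^ 2 + z s ^ 2) (2 * γ * (y t ^ 2 + z t ^ 2)) t :=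
      (((hy t).pow 2).add ((hz t).pow 2)).congr_deriv
        (by linear_combination (-2 * z t ^ 2) * hβ)
    simpa only [neg_mul] using hasDerivAt_exp_neg_mul_mul_eq_zero hsq

/-- If the parameters of the hyperchaotic Lü system u̇ = δu + xz,
ẋ = α(y-x) + u, ẏ = γy - xz, ż = -βz + xy satisfy γ = -β = δ, then
I₁ = e^{-γt}(y + u) and I₂ = e^{-2γt}(y² + z²) are time-dependent first
integrals. -/
theorem lu_time_dependent_first_integrals
    (α β γ δ : ℝ) (hβ : γ = -β) (hδ : γ = δ)
    (u x y z : ℝ → ℝ)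
    (hu : ∀ t, HasDerivAt u (δ * u t + x t * z t) t)
    (hx : ∀ t, HasDerivAt x (α * (y t - x t) + u t) t)
    (hy : ∀ t, HasDerivAt y (γ * y t - x t * z t) t)
    (hz : ∀ t, HasDerivAt z (-β * z t + x t * y t) t) :
    (∀ t, HasDerivAt (fun t => exp (-γ * t) * (y t + u t)) 0 t) ∧
    (∀ t, HasDerivAt (fun t => exp (-2 * γ * t) * ((y t) ^ 2 + (z t) ^ 2)) 0 t) :=
  lu_time_dependent_first_integrals_general β γ δ hβ hδ u x y z hu hy hz
end

section
/- The functions H1 = q + s and H2 = q² + r² are first integrals of the transformed autonomous Lü system p' = αq + s, q' = -rp, r' = qp, s' = rp, and so is H3 = (1/2)p² + (q+s)·arcsin(q/√(q²+r²)) - (α-1)r on the region r > 0. -/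
open Real

/-
The arcsine in H₃ is the polar angle θ of (r, q), which for r > 0 equals arctan (q / r).
Since q' = -rp and r' = qp, it turns at speed θ' = (q'r - qr')/(q² + r²) = -p, and together
with (q + s)' = 0 the terms of H₃' cancel.
-/

theorem Real.arcsin_div_sqrt_sq_add_sq {x y : ℝ} (hy : 0 < y) :
    arcsin (x / √(x ^ 2 + y ^ 2)) = arctan (x / y) := by
  have hsqrt : √(1 + (x / y) ^ 2) = √(x ^ 2 + y ^ 2) / y := by
    rw [eq_div_iff hy.ne', ← sqrt_sq hy.le, ← sqrt_mul (by positivity), sqrt_sq hy.le]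
    congr 1
    field_simp
    ring
  rw [arctan_eq_arcsin, hsqrt, div_div_div_cancel_right₀ hy.ne']

theorem HasDerivAt.arctan_div {f g : ℝ → ℝ} {f' g' x : ℝ} (hf : HasDerivAt f f' x)
    (hg : HasDerivAt g g' x) (hgx : g x ≠ 0) :
    HasDerivAt (fun x => Real.arctan (f x / g x)) ((f' * g x - f x * g') / (f x ^ 2 + g x ^ 2)) x := by
  have h := (hf.div hg hgx).arctan
  simp only [Pi.div_apply] at h
  convert h using 1
  field_simp
  ring

/-- H₁ = q + s and H₂ = q² + r² are first integrals of the transformed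
autonomous Lü system p' = αq + s, q' = -rp, r' = qp, s' = rp, and so is
H₃ = (1/2)p² + (q+s)·arcsin(q/√(q²+r²)) - (α-1)r on the region r > 0. -/
theorem lu_autonomous_first_integrals (α : ℝ)
    (s p q r : ℝ → ℝ)
    (hp : ∀ t, HasDerivAt p (α * q t + s t) t)
    (hq : ∀ t, HasDerivAt q (-(r t * p t)) t)
    (hr : ∀ t, HasDerivAt r (q t * p t) t)
    (hs : ∀ t, HasDerivAt s (r t * p t) t) :
    (∀ t, HasDerivAt (fun t => q t + s t) 0 t) ∧
    (∀ t, HasDerivAt (fun t => (q t) ^ 2 + (r t) ^ 2) 0 t) ∧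
    (∀ t, (∀ τ, 0 < r τ) → HasDerivAt (fun t =>
      (1 / 2) * (p t) ^ 2 +
        (q t + s t) * arcsin (q t / sqrt ((q t) ^ 2 + (r t) ^ 2)) -
        (α - 1) * r t) 0 t) := by
  have hH₁ (t : ℝ) : HasDerivAt (fun t => q t + s t) 0 t :=
    ((hq t).add (hs t)).congr_deriv (by ring)
  refine ⟨hH₁, fun t => (((hq t).pow 2).add ((hr t).pow 2)).congr_deriv (by ring),
    fun t hr_pos => ?_⟩
  simp only [arcsin_div_sqrt_sq_add_sq (hr_pos _)]
  have hθ := (hq t).arctan_div (hr t) (hr_pos t).ne'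
  have hρ : q t ^ 2 + r t ^ 2 ≠ 0 := by have := hr_pos t; positivity
  exact ((((hp t).pow 2).const_mul (1 / 2)).add ((hH₁ t).mul hθ)).sub
    ((hr t).const_mul (α - 1)) |>.congr_deriv (by field_simp; ring)
end

section
/- The Jacobi last multiplier M = (τ - q²)^{-1/2} solves the divergence equation ∂ₚ(Mf) + ∂_q(Mg) = -∂ₜM for the reduced Lü planar system ṗ = (κ + (α-1)q)e^{(α+γ)t}, q̇ = -p(τ - q²)^{1/2}e^{-αt}, on the strip |q| < √τ. -/
open Real

/-- M = (τ - q²)^{-1/2} is a Jacobi last multiplier for the reduced Lü planar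
system ṗ = (κ + (α-1)q)e^{(α+γ)t}, q̇ = -p√(τ - q²)e^{-αt} on q² < τ:
∂ₜM + ∂ₚ(Mf) + ∂_q(Mg) = 0. -/
theorem lu_reduced_last_multiplier (α γ κ τ : ℝ) (hτ : 0 < τ)
    (t p q : ℝ) (hq : q ^ 2 < τ) :
    deriv (fun _ : ℝ => 1 / sqrt (τ - q ^ 2)) t +
    deriv (fun p' => (1 / sqrt (τ - q ^ 2)) *
      ((κ + (α - 1) * q) * exp ((α + γ) * t))) p +
    deriv (fun q' => (1 / sqrt (τ - q' ^ 2)) *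
      (-(p * sqrt (τ - q' ^ 2)) * exp (-α * t))) q = 0 := by
  have h1 : deriv (fun _ : ℝ => 1 / sqrt (τ - q ^ 2)) t = 0 := deriv_const _ _
  have h2 : deriv (fun p' : ℝ => (1 / sqrt (τ - q ^ 2)) *
      ((κ + (α - 1) * q) * exp ((α + γ) * t))) p = 0 := deriv_const _ _
  have heq : (fun q' => (1 / sqrt (τ - q' ^ 2)) *
      (-(p * sqrt (τ - q' ^ 2)) * exp (-α * t))) =ᶠ[nhds q]
      (fun _ : ℝ => -(p * exp (-α * t))) := by
    have hopen : IsOpen {x : ℝ | x ^ 2 < τ} := isOpen_lt (by continuity) continuous_const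
    filter_upwards [hopen.mem_nhds hq] with x hx
    have hs : sqrt (τ - x ^ 2) ≠ 0 := by
      have : (0:ℝ) < τ - x ^ 2 := by linarith [hx]
      positivity
    field_simp
  have h3 : deriv (fun q' => (1 / sqrt (τ - q' ^ 2)) *
      (-(p * sqrt (τ - q' ^ 2)) * exp (-α * t))) q = 0 := by
    rw [heq.deriv_eq]; exact deriv_const _ _
  rw [h1, h2, h3]; ring
end

section
/- The function H = (1/2)p² + κ·arcsin(q/√τ) - (α-1)√(τ - q²) is a conserved Hamiltonian, up to a multiplier, for the autonomous reduced Lü system p' = κ + (α-1)q, q' = -p√(τ - q²) on |q| < √τ; in particular dH/dt = 0 along solutions. -/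
open Real

/-- H = (1/2)p² + κ·arcsin(q/√τ) - (α-1)√(τ - q²) is conserved along the
autonomous reduced Lü system p' = κ + (α-1)q, q' = -p√(τ - q²) on q² < τ. -/
theorem lu_reduced_hamiltonian_conserved (α κ τ : ℝ) (hτ : 0 < τ)
    (p q : ℝ → ℝ)
    (hq_range : ∀ t, (q t) ^ 2 < τ)
    (hp : ∀ t, HasDerivAt p (κ + (α - 1) * q t) t)
    (hq : ∀ t, HasDerivAt q (-(p t * sqrt (τ - (q t) ^ 2))) t) :
    ∀ t, HasDerivAt (fun t =>
      (1 / 2) * (p t) ^ 2 + κ * arcsin (q t / sqrt τ) -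
        (α - 1) * sqrt (τ - (q t) ^ 2)) 0 t := by
  intro t
  have hsτ : 0 < sqrt τ := Real.sqrt_pos.mpr hτ
  have hτq : 0 < τ - (q t) ^ 2 := by linarith [hq_range t]
  have hsτq : 0 < sqrt (τ - (q t) ^ 2) := Real.sqrt_pos.mpr hτq
  have habs : |q t / sqrt τ| < 1 := by
    rw [abs_div, abs_of_pos hsτ, div_lt_one hsτ, ← Real.sqrt_sq_eq_abs]
    exact Real.sqrt_lt_sqrt (sq_nonneg _) (hq_range t)
  have h1 : q t / sqrt τ ≠ -1 := by
    intro h; rw [h] at habs; simp at habs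
  have h2 : q t / sqrt τ ≠ 1 := by
    intro h; rw [h] at habs; simp at habs
  -- key sqrt identity
  have hkey : sqrt (1 - (q t / sqrt τ) ^ 2) = sqrt (τ - (q t) ^ 2) / sqrt τ := by
    rw [div_pow, Real.sq_sqrt hτ.le,
      show 1 - (q t) ^ 2 / τ = (τ - (q t) ^ 2) / τ by field_simp,
      Real.sqrt_div hτq.le]
  -- derivative of the kinetic term
  have hd1 : HasDerivAt (fun t => (1 / 2) * (p t) ^ 2)
      (p t * (κ + (α - 1) * q t)) t := by
    have := ((hp t).pow 2).const_mul (1 / 2 : ℝ)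
    refine this.congr_deriv ?_
    ring
  -- derivative of arcsin term
  have hinner : HasDerivAt (fun t => q t / sqrt τ)
      (-(p t * sqrt (τ - (q t) ^ 2)) / sqrt τ) t := (hq t).div_const _
  have hd2 : HasDerivAt (fun t => κ * arcsin (q t / sqrt τ))
      (κ * (1 / sqrt (1 - (q t / sqrt τ) ^ 2) *
        (-(p t * sqrt (τ - (q t) ^ 2)) / sqrt τ))) t := by
    exact (((Real.hasDerivAt_arcsin h1 h2).comp t hinner).const_mul κ)
  -- derivative of sqrt term
  have hd3i : HasDerivAt (fun t => τ - (q t) ^ 2)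
      (-(2 * q t * (-(p t * sqrt (τ - (q t) ^ 2))))) t := by
    have := ((hq t).pow 2).const_sub τ
    refine this.congr_deriv ?_
    ring
  have hd3 : HasDerivAt (fun t => (α - 1) * sqrt (τ - (q t) ^ 2))
      ((α - 1) * (-(2 * q t * (-(p t * sqrt (τ - (q t) ^ 2)))) /
        (2 * sqrt (τ - (q t) ^ 2)))) t := by
    have := ((Real.hasDerivAt_sqrt hτq.ne').comp t hd3i).const_mul (α - 1)
    refine this.congr_deriv ?_
    ring
  have := (hd1.add hd2).sub hd3
  refine this.congr_deriv ?_
  rw [hkey]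
  field_simp
  ring
end

section
/- If the parameters of the hyperchaotic Qi system u̇ = -δu + λz + xy, ẋ = α(y-x) + yz, ẏ = β(x+y) - xz, ż = -γz - εu + xy satisfy α + β = 0 and γ + ε + λ = δ, then I1 = (z - u)e^{(γ+λ)t} and I2 = (x² + y²)e^{2αt} are time-dependent first integrals. -/
open Real

/-! Both quantities satisfy a scalar linear equation `ẇ = -c w`: on solutions,
`(z - u)' = -(γ + λ)(z - u)` once `δ - ε = γ + λ`, and `(x² + y²)' = -2α(x² + y²)` once `β = -α`,
the nonlinear terms cancelling. Multiplying by the integrating factor `e^{ct}` kills the derivative. -/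

theorem hasDerivAt_mul_exp_zero_of_hasDerivAt_neg_mul {f : ℝ → ℝ} {c t : ℝ}
    (hf : HasDerivAt f (-c * f t) t) : HasDerivAt (fun s => f s * exp (c * s)) 0 t := by
  have hexp : HasDerivAt (fun s => exp (c * s)) (exp (c * t) * c) t :=
    ((hasDerivAt_id t).const_mul c).exp.congr_deriv (by simp)
  exact (hf.mul hexp).congr_deriv (by ring)

section QiSystem

variable {α β γ δ ε lam : ℝ} {u x y z : ℝ → ℝ} {t : ℝ}

theorem hasDerivAt_sub_of_qi (h₂ : γ + ε + lam = δ)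
    (hu : HasDerivAt u (-δ * u t + lam * z t + x t * y t) t)
    (hz : HasDerivAt z (-γ * z t - ε * u t + x t * y t) t) :
    HasDerivAt (fun s => z s - u s) (-(γ + lam) * (z t - u t)) t :=
  (hz.sub hu).congr_deriv (by rw [← h₂]; ring)

theorem hasDerivAt_sq_add_sq_of_qi (h₁ : α + β = 0)
    (hx : HasDerivAt x (α * (y t - x t) + y t * z t) t)
    (hy : HasDerivAt y (β * (x t + y t) - x t * z t) t) :
    HasDerivAt (fun s => x s ^ 2 + y s ^ 2) (-(2 * α) * (x t ^ 2 + y t ^ 2)) t := by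
  obtain rfl : β = -α := by linarith
  exact ((hx.pow 2).add (hy.pow 2)).congr_deriv (by simp only [Nat.cast_ofNat]; ring)

end QiSystem

/-- If the parameters of the hyperchaotic Qi system u̇ = -δu + λz + xy,
ẋ = α(y-x) + yz, ẏ = β(x+y) - xz, ż = -γz - εu + xy satisfy α + β = 0 and
γ + ε + λ = δ, then I₁ = (z - u)e^{(γ+λ)t} and I₂ = (x² + y²)e^{2αt} are
time-dependent first integrals. -/
theorem qi_time_dependent_first_integrals
    (α β γ δ ε lam : ℝ) (h₁ : α + β = 0) (h₂ : γ + ε + lam = δ)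
    (u x y z : ℝ → ℝ)
    (hu : ∀ t, HasDerivAt u (-δ * u t + lam * z t + x t * y t) t)
    (hx : ∀ t, HasDerivAt x (α * (y t - x t) + y t * z t) t)
    (hy : ∀ t, HasDerivAt y (β * (x t + y t) - x t * z t) t)
    (hz : ∀ t, HasDerivAt z (-γ * z t - ε * u t + x t * y t) t) :
    (∀ t, HasDerivAt (fun t => (z t - u t) * exp ((γ + lam) * t)) 0 t) ∧
    (∀ t, HasDerivAt (fun t => ((x t) ^ 2 + (y t) ^ 2) * exp (2 * α * t)) 0 t) :=
  ⟨fun t => hasDerivAt_mul_exp_zero_of_hasDerivAt_neg_mul (hasDerivAt_sub_of_qi h₂ (hu t) (hz t)),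
    fun t => hasDerivAt_mul_exp_zero_of_hasDerivAt_neg_mul
      (hasDerivAt_sq_add_sq_of_qi h₁ (hx t) (hy t))⟩
end
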